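/- arXiv:1904.04701 — 4 statements merged into one kernel-verified Lean document; each statement's English description precedes it below -/
import Mathlib

section
/- Let 𝒜 be an incomplete pairwise comparison matrix on n alternatives with connected graph G, let {x*_ij} be an optimal solution of Problem 1, and let ε > 0. A point y* ∈ ℝⁿ satisfying the constraints of Problem 2 is a global optimum of Problem 2 if and only if there exists an n×n matrix Λ* of Lagrange multipliers such that: Λ*_ij ≥ 0 for all i,j; Λ*_ij = 0 whenever x*_ij = 0; Λ*_ij·(y*_j − y*_i + ε) = 0 for all i ≠ j with x*_ij = 1; and L y* = (1/2)(Λ* − Λ*ᵀ)1ₙ + r, where L is the graph Laplacian of G, 1ₙ is the all-ones vector, and r ∈ ℝⁿ has entries r_i = Σ_{j ∈ N_i} ln 𝒜_ij. -/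
noncomputable section

/-- A feasible pairwise ordinal preference assignment. -/
def Feasible {n : ℕ} (x : Fin n → Fin n → ℝ) : Prop :=
  (∀ i j : Fin n, i ≠ j → (x i j = 0 ∨ x i j = 1)) ∧
  (∀ i j : Fin n, i ≠ j → x i j + x j i ≤ 1) ∧
  (∀ i j k : Fin n, i ≠ j → j ≠ k → i ≠ k → x i k * x k j ≤ x i j)

/-- The weighted ordinal satisfaction index `σ`, each unordered edge counted once
(half of the sum over ordered adjacent pairs, the summand being symmetric). -/
def sigmaIdx {n : ℕ} (G : SimpleGraph (Fin n)) [DecidableRel G.Adj]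
    (A : Fin n → Fin n → ℝ) (x : Fin n → Fin n → ℝ) : ℝ :=
  (1 / 2) * ∑ i : Fin n, ∑ j : Fin n,
    if G.Adj i j then Real.log (A i j) * (x i j - x j i) else 0

open scoped Classical in
/-- The tie index `τ`. -/
def tieIdx {n : ℕ} (G : SimpleGraph (Fin n)) [DecidableRel G.Adj]
    (A : Fin n → Fin n → ℝ) (δ : ℝ) (x : Fin n → Fin n → ℝ) : ℝ :=
  -(δ / 2) * ∑ i : Fin n, ∑ j : Fin n,
    if G.Adj i j ∧ A i j = 1 then x i j + x j i else 0

/-- The graph Laplacian of `G`: `L i i = deg i`, `L i j = -1` on edges, `0` elsewhere. -/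
def lap {n : ℕ} (G : SimpleGraph (Fin n)) [DecidableRel G.Adj] :
    Matrix (Fin n) (Fin n) ℝ :=
  Matrix.of fun i j =>
    if i = j then ((Finset.univ.filter fun k => G.Adj i k).card : ℝ)
    else if G.Adj i j then -1 else 0

/-- The objective of Problem 2: `Σ_i Σ_{j ∈ N_i} (ln 𝒜_ij − y_i + y_j)²`. -/
def lossLLS {n : ℕ} (G : SimpleGraph (Fin n)) [DecidableRel G.Adj]
    (A : Fin n → Fin n → ℝ) (y : Fin n → ℝ) : ℝ :=
  ∑ i : Fin n, ∑ j : Fin n,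
    if G.Adj i j then (Real.log (A i j) - y i + y j) ^ 2 else 0

/-!
Write `f` for the objective of Problem 2 and `g = L y* - r`. Since `log 𝒜` is skew-symmetric
on edges, `f (y* + d) = f y* + 4 ⟪d, g⟫ + ∑_{i ~ j} (d i - d j)²`. Hence the KKT identity
`g = ½ (Λ - Λᵀ) 1` gives `⟪y - y*, g⟫ = ½ ∑ Λ i j ((y - y*) i - (y - y*) j) ≥ 0` for every
feasible `y`, by complementary slackness, which proves optimality. Conversely, moving a little
from an optimal `y*` along any direction `d` with `d j ≤ d i` on the active constraints
`y* i = y* j + ε` stays feasible, so `⟪d, g⟫ ≥ 0` for all such `d`. Farkas' lemma for the cone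
generated by the vectors `e i - e j` of the active pairs then writes `g` as a nonnegative
combination of them, which is the multiplier identity. The cone is closed, as Farkas' lemma
requires, because by Carathéodory's theorem it is a finite union of images of orthants under
injective linear maps.
-/

open Finset Function Matrix Filter Topology

section ConicFarkas

variable {ι E : Type*} [Fintype ι] [AddCommGroup E] [Module ℝ E]

lemma exists_pos_dependence_of_not_linearIndepOn {v : ι → E} {s : Set ι}
    (h : ¬ LinearIndepOn ℝ v s) :
    ∃ c : ι → ℝ, support c ⊆ s ∧ ∑ k, c k • v k = 0 ∧ ∃ k, 0 < c k := by
  obtain ⟨l, hls, hlv, hl⟩ : ∃ l ∈ Finsupp.supported ℝ ℝ s,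
      Finsupp.linearCombination ℝ v l = 0 ∧ l ≠ 0 := by
    simpa [linearIndepOn_iff] using h
  rw [Finsupp.linearCombination_apply, Finsupp.sum_fintype _ _ (by simp)] at hlv
  have hsupp : support l ⊆ s := by simpa [Finsupp.mem_supported] using hls
  obtain ⟨k, hk⟩ := DFunLike.ne_iff.mp hl
  rcases (ne_iff_lt_or_gt.mp hk) with hneg | hpos
  · refine ⟨-l, by rwa [support_neg], by simp [neg_smul, sum_neg_distrib, hlv], k, ?_⟩
    simpa using hneg
  · exact ⟨l, hsupp, hlv, k, hpos⟩

lemma exists_nonneg_sub_smul_support_ssubset {lam c : ι → ℝ} (hlam : 0 ≤ lam)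
    (hc : support c ⊆ support lam) (hpos : ∃ k, 0 < c k) :
    ∃ t : ℝ, 0 ≤ lam - t • c ∧ support (lam - t • c) ⊂ support lam := by
  classical
  obtain ⟨k₁, hk₁, hmin⟩ := (univ.filter fun k => 0 < c k).exists_min_image
    (fun k => lam k / c k) (by simpa [Finset.Nonempty] using hpos)
  have hck₁ : 0 < c k₁ := by simpa using hk₁
  set t := lam k₁ / c k₁
  have ht : 0 ≤ t := div_nonneg (hlam k₁) hck₁.le
  refine ⟨t, fun k => ?_, (Set.ssubset_iff_of_subset fun k hk => ?_).mpr ⟨k₁, ?_, ?_⟩⟩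
  · rcases lt_or_ge 0 (c k) with hck | hck
    · have := (le_div_iff₀ hck).mp (hmin k (by simpa using hck))
      simp only [Pi.zero_apply, Pi.sub_apply, Pi.smul_apply, smul_eq_mul]
      linarith
    · simp only [Pi.zero_apply, Pi.sub_apply, Pi.smul_apply, smul_eq_mul]
      have h0 : 0 ≤ lam k := hlam k
      nlinarith [mul_nonpos_of_nonneg_of_nonpos ht hck]
  · contrapose! hk
    have hck : c k = 0 := notMem_support.mp fun h => hk (hc h)
    simp [notMem_support.mp hk, hck]
  · exact hc hck₁.ne'
  · simp [t, div_mul_cancel₀ _ hck₁.ne']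

/-- Carathéodory's theorem for cones. -/
theorem exists_nonneg_linearIndepOn_support_sum_smul_eq (v : ι → E) {lam : ι → ℝ} (hlam : 0 ≤ lam) :
    ∃ μ : ι → ℝ, 0 ≤ μ ∧ LinearIndepOn ℝ v (support μ) ∧
      ∑ k, μ k • v k = ∑ k, lam k • v k := by
  induction h : (support lam).ncard using Nat.strong_induction_on generalizing lam with
  | _ m ih =>
  by_cases hli : LinearIndepOn ℝ v (support lam)
  · exact ⟨lam, hlam, hli, rfl⟩
  obtain ⟨c, hc, hcv, hpos⟩ := exists_pos_dependence_of_not_linearIndepOn hli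
  obtain ⟨t, hμ, hss⟩ := exists_nonneg_sub_smul_support_ssubset hlam hc hpos
  obtain ⟨μ, hμ₀, hμli, hμv⟩ := ih _ (h ▸ Set.ncard_lt_ncard hss (Set.toFinite _)) hμ rfl
  refine ⟨μ, hμ₀, hμli, hμv.trans ?_⟩
  simp [sub_smul, sum_sub_distrib, mul_smul, ← smul_sum, hcv]

lemma PointedCone.mem_hull_range_iff {v : ι → E} {x : E} :
    x ∈ PointedCone.hull ℝ (Set.range v) ↔ ∃ lam : ι → ℝ, 0 ≤ lam ∧ ∑ k, lam k • v k = x := by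
  rw [Submodule.mem_span_range_iff_exists_fun]
  constructor
  · rintro ⟨c, rfl⟩
    exact ⟨fun k => c k, fun k => (c k).2, rfl⟩
  · rintro ⟨lam, hlam, rfl⟩
    exact ⟨fun k => ⟨lam k, hlam k⟩, rfl⟩

variable [TopologicalSpace E] [IsTopologicalAddGroup E] [ContinuousSMul ℝ E] [T2Space E]

theorem PointedCone.isClosed_hull_range (v : ι → E) :
    IsClosed (PointedCone.hull ℝ (Set.range v) : Set E) := by
  classical
  have hunion : (PointedCone.hull ℝ (Set.range v) : Set E) =
      ⋃ s ∈ {s : Set ι | LinearIndepOn ℝ v s},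
        Fintype.linearCombination ℝ (fun k : s => v k) '' Set.Ici 0 := by
    ext x
    simp only [SetLike.mem_coe, mem_hull_range_iff, Set.mem_iUnion, Set.mem_image,
      Set.mem_Ici, Set.mem_ofPred_eq, Fintype.linearCombination_apply, exists_prop]
    constructor
    · rintro ⟨lam, hlam, rfl⟩
      obtain ⟨μ, hμ, hli, hμv⟩ := exists_nonneg_linearIndepOn_support_sum_smul_eq v hlam
      refine ⟨support μ, hli, fun k => μ k, fun k => hμ k, ?_⟩
      rw [← hμv]
      exact (sum_congr_set _ _ _ (fun _ _ => rfl) fun k hk => by simp [notMem_support.mp hk]).symm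
    · rintro ⟨s, -, g, hg, rfl⟩
      refine ⟨fun k => if h : k ∈ s then g ⟨k, h⟩ else 0, fun k => ?_,
        sum_congr_set _ _ _ (fun k hk => by simp [hk]) fun k hk => by simp [hk]⟩
      by_cases hk : k ∈ s
      · simpa [hk] using hg ⟨k, hk⟩
      · simp [hk]
  rw [hunion]
  refine (Set.toFinite _).isClosed_biUnion fun s hs => ?_
  exact (LinearMap.isClosedEmbedding_of_injective (LinearMap.ker_eq_bot.mpr
    (LinearIndependent.fintypeLinearCombination_injective hs))).isClosedMap _ isClosed_Ici

/-- Farkas' lemma. -/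
theorem exists_nonneg_sum_smul_eq_of_forall_dual_nonneg [LocallyConvexSpace ℝ E] (v : ι → E)
    (g : E) (h : ∀ f : StrongDual ℝ E, (∀ k, 0 ≤ f (v k)) → 0 ≤ f g) :
    ∃ lam : ι → ℝ, 0 ≤ lam ∧ ∑ k, lam k • v k = g := by
  let C : ProperCone ℝ E := ⟨PointedCone.hull ℝ (Set.range v), PointedCone.isClosed_hull_range v⟩
  by_contra hg
  obtain ⟨f, hfC, hfg⟩ := C.hyperplane_separation_point (x₀ := g) fun hgC =>
    hg (PointedCone.mem_hull_range_iff.mp hgC)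
  exact (h f fun k => hfC _ (PointedCone.subset_hull ⟨k, rfl⟩)).not_gt hfg

end ConicFarkas

section SkewMultipliers

variable {ι : Type*} [Fintype ι] [DecidableEq ι]

lemma Matrix.sub_transpose_mulVec_one (Λ : Matrix ι ι ℝ) :
    (Λ - Λᵀ) *ᵥ 1 = ∑ p : ι × ι, Λ p.1 p.2 • (Pi.single p.1 1 - Pi.single p.2 1) := by
  ext i
  simp [mulVec, dotProduct, Fintype.sum_prod_type, Finset.sum_apply, Pi.single_apply, mul_sub,
    sum_sub_distrib]

lemma Matrix.dotProduct_sub_transpose_mulVec_one (Λ : Matrix ι ι ℝ) (d : ι → ℝ) :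
    d ⬝ᵥ ((Λ - Λᵀ) *ᵥ 1) = ∑ i, ∑ j, Λ i j * (d i - d j) := by
  simp [sub_transpose_mulVec_one, dotProduct_sum, Fintype.sum_prod_type, dotProduct_sub]

lemma Matrix.dotProduct_sub_transpose_mulVec_one_nonneg {Λ : Matrix ι ι ℝ} {d : ι → ℝ}
    (hΛ : ∀ i j, 0 ≤ Λ i j) (hd : ∀ i j, Λ i j ≠ 0 → d j ≤ d i) :
    0 ≤ d ⬝ᵥ ((Λ - Λᵀ) *ᵥ 1) := by
  rw [dotProduct_sub_transpose_mulVec_one]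
  refine sum_nonneg fun i _ => sum_nonneg fun j _ => ?_
  rcases eq_or_ne (Λ i j) 0 with h | h
  · simp [h]
  · exact mul_nonneg (hΛ i j) (sub_nonneg.mpr (hd i j h))

lemma LinearMap.apply_eq_dotProduct (f : (ι → ℝ) →ₗ[ℝ] ℝ) (x : ι → ℝ) :
    f x = x ⬝ᵥ fun i => f (Pi.single i 1) := by
  conv_lhs => rw [← univ_sum_single x]
  refine (map_sum f _ _).trans (sum_congr rfl fun i _ => ?_)
  show f (Pi.single i (x i)) = x i * f (Pi.single i 1)
  rw [← smul_eq_mul, ← map_smul, ← Pi.single_smul, smul_eq_mul, mul_one]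

lemma exists_sub_transpose_mulVec_one_eq (R : ι → ι → Prop) (g : ι → ℝ)
    (h : ∀ d : ι → ℝ, (∀ i j, R i j → d j ≤ d i) → 0 ≤ d ⬝ᵥ g) :
    ∃ Λ : Matrix ι ι ℝ, (∀ i j, 0 ≤ Λ i j) ∧ (∀ i j, Λ i j ≠ 0 → R i j) ∧ (Λ - Λᵀ) *ᵥ 1 = g := by
  classical
  let v : ι × ι → ι → ℝ := fun p =>
    if R p.1 p.2 then Pi.single p.1 1 - Pi.single p.2 1 else 0
  obtain ⟨lam, hlam, hg⟩ := exists_nonneg_sum_smul_eq_of_forall_dual_nonneg v g fun f hf => by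
    set d : ι → ℝ := fun i => f (Pi.single i 1)
    have hfd : ∀ x, f x = x ⬝ᵥ d := LinearMap.apply_eq_dotProduct (f : (ι → ℝ) →ₗ[ℝ] ℝ)
    rw [hfd, dotProduct_comm]
    refine h d fun i j hij => ?_
    simpa [v, hij, hfd, sub_dotProduct] using hf (i, j)
  refine ⟨Matrix.of fun i j => if R i j then lam (i, j) else 0, fun i j => ?_, fun i j => ?_, ?_⟩
  · by_cases hij : R i j
    · simpa [hij] using hlam (i, j)
    · simp [hij]
  · by_cases hij : R i j <;> simp [hij]
  · rw [sub_transpose_mulVec_one, ← hg]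
    refine sum_congr rfl fun p _ => ?_
    by_cases hp : R p.1 p.2 <;> simp [v, hp]

end SkewMultipliers

section DifferenceConstraints

variable {ι : Type*} [Finite ι]

lemma nonneg_of_eventually_nonneg_add_mul {a b : ℝ}
    (h : ∀ᶠ t in 𝓝[>] (0 : ℝ), 0 ≤ a + t * b) : 0 ≤ a := by
  refine ge_of_tendsto ?_ h
  exact ((continuous_const.add (continuous_id.mul continuous_const)).tendsto' 0 a
    (by simp)).mono_left nhdsWithin_le_nhds

lemma eventually_add_smul_of_active_le (R : ι → ι → Prop) {ε : ℝ} {y d : ι → ℝ}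
    (hy : ∀ i j, R i j → y j + ε ≤ y i) (hd : ∀ i j, R i j → y i = y j + ε → d j ≤ d i) :
    ∀ᶠ t in 𝓝[>] (0 : ℝ), ∀ i j, R i j → (y + t • d) j + ε ≤ (y + t • d) i := by
  simp only [eventually_all]
  intro i j hR
  rcases (hy i j hR).eq_or_lt with hact | hslack
  · filter_upwards [self_mem_nhdsWithin] with t (ht : 0 < t)
    have := mul_le_mul_of_nonneg_left (hd i j hR hact.symm) ht.le
    simp only [Pi.add_apply, Pi.smul_apply, smul_eq_mul]
    linarith
  · have hlim : Tendsto (fun t : ℝ => (y + t • d) i - (y + t • d) j) (𝓝[>] 0)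
        (𝓝 (y i - y j)) :=
      ((by fun_prop : Continuous fun t : ℝ => (y + t • d) i - (y + t • d) j).tendsto' 0 _
        (by simp)).mono_left nhdsWithin_le_nhds
    filter_upwards [hlim.eventually_const_lt (by linarith : ε < y i - y j)] with t ht
    linarith

end DifferenceConstraints

section LeastSquares

variable {n : ℕ} (G : SimpleGraph (Fin n)) [DecidableRel G.Adj]

def logRowSum (A : Fin n → Fin n → ℝ) : Fin n → ℝ :=
  fun i => ∑ j, if G.Adj i j then Real.log (A i j) else 0

lemma sum_adj_comm (f : Fin n → Fin n → ℝ) :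
    ∑ i, ∑ j, (if G.Adj i j then f i j else 0) = ∑ i, ∑ j, if G.Adj i j then f j i else 0 := by
  rw [sum_comm]
  exact sum_congr rfl fun i _ => sum_congr rfl fun j _ => if_congr (G.adj_comm j i) rfl rfl

lemma lap_mulVec_apply (y : Fin n → ℝ) (i : Fin n) :
    (lap G *ᵥ y) i = ∑ j, if G.Adj i j then y i - y j else 0 := by
  have hterm : ∀ j, lap G i j * y j =
      (if i = j then (#{k | G.Adj i k} : ℝ) * y i else 0) + if G.Adj i j then -y j else 0 := by
    intro j
    by_cases hij : i = j
    · subst hij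
      simp [lap]
    · simp [lap, hij]
  simp only [mulVec, dotProduct, hterm, sum_add_distrib, sum_ite_eq, mem_univ, if_true]
  rw [← sum_filter, ← sum_filter, sum_sub_distrib, sum_const, nsmul_eq_mul, sub_eq_add_neg,
    sum_neg_distrib]

lemma sum_adj_mul_sub_of_skew {e : Fin n → Fin n → ℝ} (he : ∀ i j, G.Adj i j → e j i = -e i j)
    (d : Fin n → ℝ) :
    ∑ i, ∑ j, (if G.Adj i j then e i j * (d i - d j) else 0) =
      2 * ∑ i, d i * ∑ j, if G.Adj i j then e i j else 0 := by
  have hswap : ∑ i, ∑ j, (if G.Adj i j then e i j * d j else 0) =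
      -∑ i, ∑ j, if G.Adj i j then e i j * d i else 0 := by
    rw [sum_adj_comm, ← sum_neg_distrib]
    refine sum_congr rfl fun i _ => ?_
    rw [← sum_neg_distrib]
    refine sum_congr rfl fun j _ => ?_
    split_ifs with h
    · rw [he i j h, neg_mul]
    · rw [neg_zero]
  calc ∑ i, ∑ j, (if G.Adj i j then e i j * (d i - d j) else 0)
      = ∑ i, ∑ j, ((if G.Adj i j then e i j * d i else 0)
          - if G.Adj i j then e i j * d j else 0) := by
        refine sum_congr rfl fun i _ => sum_congr rfl fun j _ => ?_
        split_ifs <;> ring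
    _ = 2 * ∑ i, ∑ j, if G.Adj i j then e i j * d i else 0 := by
        simp only [sum_sub_distrib]
        rw [hswap]
        ring
    _ = 2 * ∑ i, d i * ∑ j, if G.Adj i j then e i j else 0 := by
        simp only [mul_sum, mul_ite, mul_zero, mul_comm]

lemma sum_adj_residual (A : Fin n → Fin n → ℝ) (y : Fin n → ℝ) (i : Fin n) :
    ∑ j, (if G.Adj i j then Real.log (A i j) - y i + y j else 0) =
      -(lap G *ᵥ y - logRowSum G A) i := by
  rw [Pi.sub_apply, lap_mulVec_apply, logRowSum, neg_sub, ← sum_sub_distrib]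
  exact sum_congr rfl fun j _ => by split_ifs <;> ring

variable {G} {A : Fin n → Fin n → ℝ}

lemma lossLLS_add (hA : ∀ i j, G.Adj i j → Real.log (A j i) = -Real.log (A i j))
    (y d : Fin n → ℝ) :
    lossLLS G A (y + d) = lossLLS G A y + 4 * (d ⬝ᵥ (lap G *ᵥ y - logRowSum G A)) +
      ∑ i, ∑ j, if G.Adj i j then (d i - d j) ^ 2 else 0 := by
  have hcross := sum_adj_mul_sub_of_skew G
    (e := fun i j => Real.log (A i j) - y i + y j) (fun i j h => by rw [hA i j h]; ring) d
  simp only [sum_adj_residual] at hcross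
  unfold lossLLS
  calc ∑ i, ∑ j, (if G.Adj i j then (Real.log (A i j) - (y + d) i + (y + d) j) ^ 2 else 0)
      = ∑ i, ∑ j, ((if G.Adj i j then (Real.log (A i j) - y i + y j) ^ 2 else 0)
          - 2 * (if G.Adj i j then (Real.log (A i j) - y i + y j) * (d i - d j) else 0)
          + if G.Adj i j then (d i - d j) ^ 2 else 0) := by
        simp only [Pi.add_apply]
        refine sum_congr rfl fun i _ => sum_congr rfl fun j _ => ?_
        split_ifs <;> ring
    _ = _ := by
        simp only [sum_add_distrib, sum_sub_distrib, ← mul_sum, hcross, dotProduct,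
          mul_neg, sum_neg_distrib]
        ring

lemma lossLLS_le_of_dotProduct_nonneg
    (hA : ∀ i j, G.Adj i j → Real.log (A j i) = -Real.log (A i j)) {y y' : Fin n → ℝ}
    (h : 0 ≤ (y' - y) ⬝ᵥ (lap G *ᵥ y - logRowSum G A)) : lossLLS G A y ≤ lossLLS G A y' := by
  have hQ : 0 ≤ ∑ i, ∑ j, if G.Adj i j then ((y' - y) i - (y' - y) j) ^ 2 else 0 :=
    sum_nonneg fun i _ => sum_nonneg fun j _ => by split_ifs <;> positivity
  have := lossLLS_add hA y (y' - y)
  rw [add_sub_cancel] at this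
  linarith

lemma dotProduct_nonneg_of_eventually_lossLLS_le
    (hA : ∀ i j, G.Adj i j → Real.log (A j i) = -Real.log (A i j)) {y d : Fin n → ℝ}
    (h : ∀ᶠ t in 𝓝[>] (0 : ℝ), lossLLS G A y ≤ lossLLS G A (y + t • d)) :
    0 ≤ d ⬝ᵥ (lap G *ᵥ y - logRowSum G A) := by
  set Q := ∑ i, ∑ j, if G.Adj i j then (d i - d j) ^ 2 else 0
  have hQ : ∀ t : ℝ, (∑ i, ∑ j, if G.Adj i j then ((t • d) i - (t • d) j) ^ 2 else 0) =
      t ^ 2 * Q := by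
    intro t
    simp only [Q, mul_sum, mul_ite, mul_zero, Pi.smul_apply, smul_eq_mul, ← mul_sub, mul_pow]
  suffices 0 ≤ 4 * (d ⬝ᵥ (lap G *ᵥ y - logRowSum G A)) by linarith
  refine nonneg_of_eventually_nonneg_add_mul (b := Q) ?_
  filter_upwards [h, self_mem_nhdsWithin] with t ht (htpos : 0 < t)
  rw [lossLLS_add hA, hQ, smul_dotProduct, smul_eq_mul] at ht
  nlinarith

lemma dotProduct_nonneg_of_forall_lossLLS_le
    (hA : ∀ i j, G.Adj i j → Real.log (A j i) = -Real.log (A i j)) (R : Fin n → Fin n → Prop)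
    {ε : ℝ} {y d : Fin n → ℝ} (hy : ∀ i j, R i j → y j + ε ≤ y i)
    (hmin : ∀ y', (∀ i j, R i j → y' j + ε ≤ y' i) → lossLLS G A y ≤ lossLLS G A y')
    (hd : ∀ i j, R i j → y i = y j + ε → d j ≤ d i) :
    0 ≤ d ⬝ᵥ (lap G *ᵥ y - logRowSum G A) :=
  dotProduct_nonneg_of_eventually_lossLLS_le hA <|
    (eventually_add_smul_of_active_le R hy hd).mono fun _ ht => hmin _ ht

lemma lossLLS_le_of_multipliers
    (hA : ∀ i j, G.Adj i j → Real.log (A j i) = -Real.log (A i j)) {R : Fin n → Fin n → Prop}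
    {ε : ℝ} {y y' : Fin n → ℝ} {Λ : Matrix (Fin n) (Fin n) ℝ} (hΛ : ∀ i j, 0 ≤ Λ i j)
    (hΛR : ∀ i j, i ≠ j → Λ i j ≠ 0 → R i j ∧ y i = y j + ε)
    (hg : lap G *ᵥ y = (1 / 2 : ℝ) • ((Λ - Λᵀ) *ᵥ 1) + logRowSum G A)
    (hy' : ∀ i j, R i j → y' j + ε ≤ y' i) :
    lossLLS G A y ≤ lossLLS G A y' := by
  refine lossLLS_le_of_dotProduct_nonneg hA ?_
  rw [sub_eq_of_eq_add hg, dotProduct_smul, smul_eq_mul]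
  refine mul_nonneg (by norm_num) (dotProduct_sub_transpose_mulVec_one_nonneg hΛ fun i j hne => ?_)
  rcases eq_or_ne i j with rfl | hij
  · rfl
  obtain ⟨hR, hact⟩ := hΛR i j hij hne
  have := hy' i j hR
  simp only [Pi.sub_apply]
  linarith

end LeastSquares

theorem problem2_global_optimality_KKT_general
    {n : ℕ} (G : SimpleGraph (Fin n)) [DecidableRel G.Adj]
    (A : Fin n → Fin n → ℝ)
    (hrec : ∀ i j, G.Adj i j → A j i = 1 / A i j)
    (xs : Fin n → Fin n → ℝ) (hfeas : Feasible xs)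
    (ε : ℝ)
    (ystar : Fin n → ℝ)
    (hycon : ∀ i j, i ≠ j → xs i j = 1 → ystar j + ε ≤ ystar i) :
    (∀ y : Fin n → ℝ, (∀ i j, i ≠ j → xs i j = 1 → y j + ε ≤ y i) →
        lossLLS G A ystar ≤ lossLLS G A y) ↔
      ∃ Λ : Matrix (Fin n) (Fin n) ℝ,
        (∀ i j, 0 ≤ Λ i j) ∧
        (∀ i j, xs i j = 0 → Λ i j = 0) ∧
        (∀ i j, i ≠ j → xs i j = 1 → Λ i j * (ystar j - ystar i + ε) = 0) ∧
        (lap G).mulVec ystar =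
          ((1 : ℝ) / 2) • ((Λ - Λ.transpose).mulVec (fun _ => 1)) +
            (fun i => ∑ j : Fin n, if G.Adj i j then Real.log (A i j) else 0) := by
  have hA : ∀ i j, G.Adj i j → Real.log (A j i) = -Real.log (A i j) := fun i j h => by
    rw [hrec i j h, one_div, Real.log_inv]
  constructor
  · intro hmin
    obtain ⟨Λ, hΛ, hΛR, hΛg⟩ := exists_sub_transpose_mulVec_one_eq
      (fun i j => (i ≠ j ∧ xs i j = 1) ∧ ystar i = ystar j + ε) (lap G *ᵥ ystar - logRowSum G A)
      fun d hd => dotProduct_nonneg_of_forall_lossLLS_le hA (fun i j => i ≠ j ∧ xs i j = 1)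
        (fun i j h => hycon i j h.1 h.2) (fun y hy => hmin y fun i j hij hx => hy i j ⟨hij, hx⟩)
        fun i j h hact => hd i j ⟨h, hact⟩
    refine ⟨(2 : ℝ) • Λ, fun i j => ?_, fun i j hx => ?_, fun i j _ _ => ?_, ?_⟩
    · simpa using mul_nonneg zero_le_two (hΛ i j)
    · by_contra hne
      simpa [hx] using (hΛR i j (by simpa using hne)).1.2
    · by_cases h : Λ i j = 0
      · simp [h]
      · simp [(hΛR i j h).2]
    · refine eq_add_of_sub_eq ?_
      change lap G *ᵥ ystar - logRowSum G A = (1 / 2 : ℝ) • (((2 : ℝ) • Λ - ((2 : ℝ) • Λ)ᵀ) *ᵥ 1)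
      rw [← hΛg, transpose_smul, ← smul_sub, smul_mulVec, smul_smul]
      norm_num
  · rintro ⟨Λ, hΛ, hΛ0, hΛcs, hΛg⟩ y hy
    refine lossLLS_le_of_multipliers hA (R := fun i j => i ≠ j ∧ xs i j = 1) hΛ
      (fun i j hij hne => ?_) hΛg fun i j h => hy i j h.1 h.2
    have hx : xs i j = 1 := (hfeas.1 i j hij).resolve_left fun h => hne (hΛ0 i j h)
    have := (mul_eq_zero.mp (hΛcs i j hij hx)).resolve_left hne
    exact ⟨⟨hij, hx⟩, by linarith⟩

/-- **KKT characterization of the global optimum of Problem 2.**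
Given an incomplete pairwise comparison matrix `𝒜` with connected graph `G`, an
optimal solution `x*` of Problem 1 and `ε > 0`, a point `y*` satisfying the
constraints of Problem 2 is a global optimum of Problem 2 if and only if there is
a matrix `Λ*` of Lagrange multipliers with `Λ*_ij ≥ 0`, `Λ*_ij = 0` whenever
`x*_ij = 0`, complementary slackness `Λ*_ij (y*_j − y*_i + ε) = 0` on the active
index pairs, and `L y* = ½ (Λ* − Λ*ᵀ) 1ₙ + r`, where `r_i = Σ_{j ∈ N_i} ln 𝒜_ij`. -/
theorem problem2_global_optimality_KKT
    {n : ℕ} (G : SimpleGraph (Fin n)) [DecidableRel G.Adj] (hconn : G.Connected)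
    (A : Fin n → Fin n → ℝ)
    (hpos : ∀ i j, G.Adj i j → 0 < A i j)
    (hrec : ∀ i j, G.Adj i j → A j i = 1 / A i j)
    (hzero : ∀ i j, ¬ G.Adj i j → A i j = 0)
    (δ : ℝ) (hδ : 0 < δ)
    (xs : Fin n → Fin n → ℝ) (hfeas : Feasible xs)
    (hopt : ∀ y, Feasible y →
      sigmaIdx G A y + tieIdx G A δ y ≤ sigmaIdx G A xs + tieIdx G A δ xs)
    (ε : ℝ) (hε : 0 < ε)
    (ystar : Fin n → ℝ)
    (hycon : ∀ i j, i ≠ j → xs i j = 1 → ystar j + ε ≤ ystar i) :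
    (∀ y : Fin n → ℝ, (∀ i j, i ≠ j → xs i j = 1 → y j + ε ≤ y i) →
        lossLLS G A ystar ≤ lossLLS G A y) ↔
      ∃ Λ : Matrix (Fin n) (Fin n) ℝ,
        (∀ i j, 0 ≤ Λ i j) ∧
        (∀ i j, xs i j = 0 → Λ i j = 0) ∧
        (∀ i j, i ≠ j → xs i j = 1 → Λ i j * (ystar j - ystar i + ε) = 0) ∧
        (lap G).mulVec ystar =
          ((1 : ℝ) / 2) • ((Λ - Λ.transpose).mulVec (fun _ => 1)) +
            (fun i => ∑ j : Fin n, if G.Adj i j then Real.log (A i j) else 0) :=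
  problem2_global_optimality_KKT_general G A hrec xs hfeas ε ystar hycon
end
end

section
/- Let 𝒜 be an incomplete pairwise comparison matrix on n alternatives with connected graph G = (V,E), let L be the graph Laplacian of G, and let P be the n×n matrix with P_ij = ln 𝒜_ij if {i,j} ∈ E and P_ij = 0 otherwise. Then the linear system L y = P 1ₙ admits a solution y* ∈ ℝⁿ, and the full solution set is { y* + c·1ₙ : c ∈ ℝ }, i.e., the solution is unique up to adding a constant vector (in particular, it becomes unique after fixing one component of y). -/
/-!
The Laplacian `L` of a connected graph is symmetric with kernel the constants, so its range is
the orthogonal complement of `1ₙ`, i.e. the vectors with zero sum. Reciprocity makes `P`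
antisymmetric, hence `1ₙᵀ P 1ₙ = 0` and `P 1ₙ` lies in the range of `L`; any two solutions of
`L y = P 1ₙ` differ by an element of the kernel, a constant vector.
-/

noncomputable section

/-- The matrix `P` with `P_ij = ln 𝒜_ij` on edges and `0` elsewhere. -/
def Pmat {n : ℕ} (G : SimpleGraph (Fin n)) [DecidableRel G.Adj]
    (A : Fin n → Fin n → ℝ) : Matrix (Fin n) (Fin n) ℝ :=
  Matrix.of fun i j => if G.Adj i j then Real.log (A i j) else 0

open Matrix

theorem Matrix.IsSymm.range_mulVecLin_eq_ker_dotProduct {K ι : Type*} [Field K] [Fintype ι]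
    [DecidableEq ι] {M : Matrix ι ι K} (hM : M.IsSymm) {v : ι → K} (hv : v ≠ 0)
    (hker : LinearMap.ker M.mulVecLin = K ∙ v) :
    LinearMap.range M.mulVecLin = LinearMap.ker (dotProductEquiv K ι v) := by
  have hle : LinearMap.range M.mulVecLin ≤ LinearMap.ker (dotProductEquiv K ι v) := by
    rintro _ ⟨x, rfl⟩
    have hMv : M *ᵥ v = 0 := by
      simpa using hker.ge (Submodule.mem_span_singleton_self v)
    rw [LinearMap.mem_ker, dotProductEquiv_apply_apply, mulVecLin_apply, dotProduct_mulVec,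
      ← mulVec_transpose, hM.eq, hMv, zero_dotProduct]
  refine Submodule.eq_of_le_of_finrank_eq hle ?_
  have hrank := LinearMap.finrank_range_add_finrank_ker M.mulVecLin
  have hcorank := (dotProductEquiv K ι v).finrank_ker_add_one_of_ne_zero
    ((dotProductEquiv K ι).map_ne_zero_iff.mpr hv)
  rw [hker, finrank_span_singleton hv] at hrank
  omega

theorem Matrix.sum_mulVec_one_eq_zero_of_transpose_eq_neg {R ι : Type*} [CommRing R]
    [NoZeroDivisors R] [CharZero R] [Fintype ι] {M : Matrix ι ι R} (hM : Mᵀ = -M) :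
    ∑ i, (M *ᵥ 1) i = 0 := by
  refine self_eq_neg.mp ?_
  calc ∑ i, (M *ᵥ 1) i = 1 ⬝ᵥ M *ᵥ 1 := (one_dotProduct _).symm
    _ = (Mᵀ *ᵥ 1) ⬝ᵥ 1 := by rw [dotProduct_mulVec, mulVec_transpose]
    _ = -∑ i, (M *ᵥ 1) i := by rw [hM, neg_mulVec, neg_dotProduct, dotProduct_one]

namespace SimpleGraph

variable {V : Type*} [Fintype V] [DecidableEq V] {G : SimpleGraph V} [DecidableRel G.Adj]

theorem Connected.ker_lapMatrix_mulVecLin (hconn : G.Connected) :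
    LinearMap.ker (G.lapMatrix ℝ).mulVecLin = ℝ ∙ (1 : V → ℝ) := by
  obtain ⟨v₀⟩ := hconn.nonempty
  ext x
  rw [LinearMap.mem_ker, mulVecLin_apply, lapMatrix_mulVec_eq_zero_iff_forall_reachable,
    Submodule.mem_span_singleton]
  constructor
  · exact fun hx => ⟨x v₀, funext fun v => by simpa using (hx v v₀ (hconn v v₀)).symm⟩
  · rintro ⟨c, rfl⟩ _ _ _
    simp

theorem Connected.lapMatrix_mulVec_eq_iff (hconn : G.Connected) {x y : V → ℝ} :
    G.lapMatrix ℝ *ᵥ x = G.lapMatrix ℝ *ᵥ y ↔ ∃ c : ℝ, x = y + c • 1 := by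
  rw [← sub_eq_zero, ← mulVec_sub, ← mulVecLin_apply, ← LinearMap.mem_ker,
    hconn.ker_lapMatrix_mulVecLin, Submodule.mem_span_singleton]
  simp only [eq_sub_iff_add_eq, eq_comm (a := x), add_comm]

theorem Connected.exists_lapMatrix_mulVec_eq_iff (hconn : G.Connected)
    {b : V → ℝ} : (∃ y, G.lapMatrix ℝ *ᵥ y = b) ↔ ∑ v, b v = 0 := by
  have : Nonempty V := hconn.nonempty
  rw [← one_dotProduct, ← dotProductEquiv_apply_apply, ← LinearMap.mem_ker,
    ← (isSymm_lapMatrix ℝ G).range_mulVecLin_eq_ker_dotProduct one_ne_zero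
      hconn.ker_lapMatrix_mulVecLin]
  rfl

end SimpleGraph

theorem lap_eq_lapMatrix {n : ℕ} (G : SimpleGraph (Fin n)) [DecidableRel G.Adj] :
    lap G = G.lapMatrix ℝ := by
  ext i j
  by_cases hij : i = j
  · subst hij
    simp [lap, SimpleGraph.lapMatrix, SimpleGraph.degMatrix, SimpleGraph.degree,
      SimpleGraph.neighborFinset_eq_filter]
  · by_cases hadj : G.Adj i j <;>
      simp [lap, SimpleGraph.lapMatrix, SimpleGraph.degMatrix, hij, hadj]

theorem Pmat_transpose_eq_neg {n : ℕ} {G : SimpleGraph (Fin n)} [DecidableRel G.Adj]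
    {A : Fin n → Fin n → ℝ} (hrec : ∀ i j, G.Adj i j → A j i = 1 / A i j) :
    (Pmat G A)ᵀ = -Pmat G A := by
  ext i j
  by_cases hadj : G.Adj i j
  · simp [Pmat, hadj, hadj.symm, hrec i j hadj]
  · have hadj' : ¬G.Adj j i := fun h => hadj h.symm
    simp [Pmat, hadj, hadj']

theorem lap_system_solvable_unique_up_to_constant_general
    {n : ℕ} (G : SimpleGraph (Fin n)) [DecidableRel G.Adj] (hconn : G.Connected)
    (A : Fin n → Fin n → ℝ)
    (hrec : ∀ i j, G.Adj i j → A j i = 1 / A i j) :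
    ∃ ystar : Fin n → ℝ,
      (lap G).mulVec ystar = (Pmat G A).mulVec (fun _ => 1) ∧
      ∀ y : Fin n → ℝ,
        (lap G).mulVec y = (Pmat G A).mulVec (fun _ => 1) ↔
          ∃ c : ℝ, y = ystar + c • (fun _ => (1 : ℝ)) := by
  rw [lap_eq_lapMatrix, ← Pi.one_def]
  obtain ⟨ystar, hystar⟩ := hconn.exists_lapMatrix_mulVec_eq_iff.mpr
    (sum_mulVec_one_eq_zero_of_transpose_eq_neg (Pmat_transpose_eq_neg hrec))
  refine ⟨ystar, hystar, fun y => ?_⟩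
  rw [← hystar]
  exact hconn.lapMatrix_mulVec_eq_iff

/-- **Solvability of the normal equations and uniqueness up to a constant.**
For an incomplete pairwise comparison matrix `𝒜` with connected graph `G`,
the linear system `L y = P 1ₙ` has a solution `y*`, and its full solution set is
`{ y* + c·1ₙ : c ∈ ℝ }`. -/
theorem lap_system_solvable_unique_up_to_constant
    {n : ℕ} (G : SimpleGraph (Fin n)) [DecidableRel G.Adj] (hconn : G.Connected)
    (A : Fin n → Fin n → ℝ)
    (hpos : ∀ i j, G.Adj i j → 0 < A i j)
    (hrec : ∀ i j, G.Adj i j → A j i = 1 / A i j)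
    (hzero : ∀ i j, ¬ G.Adj i j → A i j = 0) :
    ∃ ystar : Fin n → ℝ,
      (lap G).mulVec ystar = (Pmat G A).mulVec (fun _ => 1) ∧
      ∀ y : Fin n → ℝ,
        (lap G).mulVec y = (Pmat G A).mulVec (fun _ => 1) ↔
          ∃ c : ℝ, y = ystar + c • (fun _ => (1 : ℝ)) :=
  lap_system_solvable_unique_up_to_constant_general G hconn A hrec
end
end

section
/- Let the incomplete pairwise comparison matrix 𝒜 on m alternatives (m ≥ 3) be such that its associated directed graph G_d is a single directed cycle v_1 → v_2 → ⋯ → v_m → v_1, with 𝒜 values strictly greater than 1 on every edge of the cycle, and suppose the edge (v_m, v_1) is the unique edge of the cycle attaining the minimum 𝒜 value. Then Problem 1 has a unique optimal solution, namely x_ij = 1 for all 1 ≤ i < j ≤ m and x_ij = 0 for all other ordered pairs; its optimal value is σ = Σ_{i=1}^{m−1} ln 𝒜_{i,i+1} − ln 𝒜_{m,1}. -/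
noncomputable section

/-!
On the cycle, `σ(y) = Σᵢ cᵢ (y_{i,i+1} − y_{i+1,i})` with `cᵢ = ln 𝒜_{i,i+1} > 0`, and `τ = 0`.
If every cycle edge except `a` is oriented forward, transitivity along the path
`a + 1 → ⋯ → a` forces `y_{a+1,a} = 1`, so `σ(y) = Σ c − 2 c_a`; if two edges `a ≠ b` are not
oriented forward, `σ(y) ≤ Σ c − c_a − c_b`. As `c_last` is the strict minimum, `σ(y) ≤ Σ c − 2 c_last`,
with equality only if every edge but the last is forward, and then transitivity along
`0 → 1 → ⋯ → last` forces `y` to be the order `i < j`.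
-/

theorem Fin.add_one_ne_self {n : ℕ} (i : Fin (n + 2)) : i + 1 ≠ i :=
  add_eq_left.not.mpr one_ne_zero

theorem Fin.add_one_add_one_ne_self {n : ℕ} (i : Fin (n + 3)) : i + 1 + 1 ≠ i := by
  rw [add_assoc, Ne, add_eq_left, Fin.ext_iff, Fin.val_add, Fin.val_one,
    Nat.mod_eq_of_lt (by omega)]
  simp

namespace Feasible

variable {n : ℕ} {y : Fin n → Fin n → ℝ}

theorem nonneg (hy : Feasible y) {i j : Fin n} (hij : i ≠ j) : 0 ≤ y i j := by
  rcases hy.1 i j hij with h | h <;> simp [h]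

theorem le_one (hy : Feasible y) {i j : Fin n} (hij : i ≠ j) : y i j ≤ 1 := by
  rcases hy.1 i j hij with h | h <;> simp [h]

theorem eq_one_of_ne_zero (hy : Feasible y) {i j : Fin n} (hij : i ≠ j) (h : y i j ≠ 0) :
    y i j = 1 :=
  (hy.1 i j hij).resolve_left h

theorem eq_zero_of_eq_one (hy : Feasible y) {i j : Fin n} (hij : i ≠ j) (h : y j i = 1) :
    y i j = 0 := by
  have := hy.2.1 i j hij
  have := hy.nonneg hij
  linarith

theorem trans_eq_one (hy : Feasible y) {i j k : Fin n} (hij : i ≠ j) (hik : i ≠ k)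
    (hkj : k ≠ j) (hk : y i k = 1) (hj : y k j = 1) : y i j = 1 := by
  have := hy.2.2 i j k hij hkj.symm hik
  rw [hk, hj, one_mul] at this
  exact le_antisymm (hy.le_one hij) this

theorem comp {m : ℕ} (hy : Feasible y) {e : Fin m → Fin n} (he : Function.Injective e) :
    Feasible fun i j => y (e i) (e j) :=
  ⟨fun _ _ hij => hy.1 _ _ (he.ne hij), fun _ _ hij => hy.2.1 _ _ (he.ne hij),
    fun _ _ _ hij hjk hik => hy.2.2 _ _ _ (he.ne hij) (he.ne hjk) (he.ne hik)⟩

end Feasible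

theorem feasible_ite_lt (n : ℕ) : Feasible fun i j : Fin n => if i < j then (1 : ℝ) else 0 := by
  refine ⟨fun i j _ => ?_, fun i j hij => ?_, fun i j k _ _ _ => ?_⟩
  · dsimp only
    split_ifs <;> simp
  · rcases hij.lt_or_gt with h | h <;> simp [h, h.not_gt]
  · dsimp only
    split_ifs with hik hkj hij <;> first | exact absurd (hik.trans hkj) hij | norm_num

namespace Feasible

variable {n : ℕ} {y : Fin (n + 1) → Fin (n + 1) → ℝ}

theorem eq_one_of_lt (hy : Feasible y) (h : ∀ i, i ≠ Fin.last n → y i (i + 1) = 1)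
    {i j : Fin (n + 1)} (hij : i < j) : y i j = 1 := by
  induction j using Fin.induction generalizing i with
  | zero => exact absurd hij (Fin.not_lt_zero i)
  | succ j ih =>
    have hstep : y j.castSucc j.succ = 1 := by
      rw [← Fin.coeSucc_eq_succ]
      exact h _ (Fin.castSucc_lt_last j).ne
    rcases (Fin.le_castSucc_iff.mpr hij).eq_or_lt with rfl | hlt
    · exact hstep
    · exact hy.trans_eq_one hij.ne hlt.ne Fin.castSucc_lt_succ.ne (ih hlt) hstep

theorem eq_ite_lt (hy : Feasible y) (h : ∀ i, i ≠ Fin.last n → y i (i + 1) = 1)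
    {i j : Fin (n + 1)} (hij : i ≠ j) : y i j = if i < j then 1 else 0 := by
  rcases hij.lt_or_gt with hlt | hgt
  · rw [if_pos hlt, hy.eq_one_of_lt h hlt]
  · rw [if_neg hgt.not_gt, hy.eq_zero_of_eq_one hij (hy.eq_one_of_lt h hgt)]

/-- Rotating the cycle so that it starts at `a + 1` turns the path `a + 1 → ⋯ → a` into the
increasing path `0 → ⋯ → last`. -/
theorem add_one_self_eq_one (hn : 0 < n) (hy : Feasible y) (a : Fin (n + 1))
    (h : ∀ i, i ≠ a → y i (i + 1) = 1) : y (a + 1) a = 1 := by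
  have hrot := hy.comp (add_left_injective (a + 1))
  have hstep (i : Fin (n + 1)) (hi : i ≠ Fin.last n) :
      y (i + (a + 1)) (i + 1 + (a + 1)) = 1 := by
    rw [add_right_comm]
    refine h _ fun hia => hi (add_right_cancel (b := 1) ?_)
    rw [Fin.last_add_one, ← add_eq_right (b := a), add_assoc, add_comm 1 a]
    exact hia
  have hpath := hrot.eq_one_of_lt hstep (i := 0) (j := Fin.last n) (by simp [Fin.lt_def, hn])
  have hend : Fin.last n + (a + 1) = a := by
    rw [add_left_comm, Fin.last_add_one, add_zero]
  rwa [zero_add, hend] at hpath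

end Feasible

def cycleSigma {n : ℕ} [NeZero n] (c : Fin n → ℝ) (y : Fin n → Fin n → ℝ) : ℝ :=
  ∑ i, c i * (y i (i + 1) - y (i + 1) i)

section cycleSigma

open Finset

variable {n : ℕ} {c : Fin (n + 2) → ℝ} {y : Fin (n + 2) → Fin (n + 2) → ℝ}

theorem cycleSigma_eq_of_forall_ne (hy : Feasible y) {a : Fin (n + 2)} (ha : y (a + 1) a = 1)
    (h : ∀ i, i ≠ a → y i (i + 1) = 1) : cycleSigma c y = ∑ i, c i - 2 * c a := by
  have hforward : ∀ i ∈ univ.erase a, c i * (y i (i + 1) - y (i + 1) i) = c i := fun i hi => by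
    have hia := ne_of_mem_erase hi
    rw [h i hia, hy.eq_zero_of_eq_one (Fin.add_one_ne_self i) (h i hia)]
    ring
  rw [cycleSigma, ← add_sum_erase _ _ (mem_univ a), ← add_sum_erase _ c (mem_univ a),
    sum_congr rfl hforward, ha, hy.eq_zero_of_eq_one (Fin.add_one_ne_self a).symm ha]
  ring

theorem cycleSigma_ite_lt :
    cycleSigma c (fun i j => if i < j then 1 else 0) = ∑ i, c i - 2 * c (Fin.last (n + 1)) :=
  cycleSigma_eq_of_forall_ne (feasible_ite_lt _)
    (by simp [Fin.last_add_one, Fin.lt_def])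
    fun i hi => if_pos (Fin.lt_add_one_iff.mpr (Fin.lt_last_iff_ne_last.mpr hi))

theorem cycleSigma_le_sub_of_ne (hy : Feasible y) (hc : ∀ i, 0 ≤ c i) {a b : Fin (n + 2)}
    (hab : a ≠ b) (ha : y a (a + 1) = 0) (hb : y b (b + 1) = 0) :
    cycleSigma c y ≤ ∑ i, c i - c a - c b := by
  set loss : Fin (n + 2) → ℝ := fun i => c i * (1 - (y i (i + 1) - y (i + 1) i))
  have hloss_nonneg (i : Fin (n + 2)) : 0 ≤ loss i := by
    have := hy.le_one (Fin.add_one_ne_self i).symm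
    have := hy.nonneg (Fin.add_one_ne_self i)
    exact mul_nonneg (hc i) (by linarith)
  have hloss_ge (i : Fin (n + 2)) (hi : y i (i + 1) = 0) : c i ≤ loss i := by
    have := hy.nonneg (Fin.add_one_ne_self i)
    simp only [loss, hi]
    nlinarith [hc i]
  have hpair : c a + c b ≤ ∑ i, loss i := calc
    c a + c b ≤ ∑ i ∈ {a, b}, loss i := by
      rw [sum_pair hab]
      linarith [hloss_ge a ha, hloss_ge b hb]
    _ ≤ ∑ i, loss i :=
      sum_le_sum_of_subset_of_nonneg (subset_univ _) fun i _ _ => hloss_nonneg i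
  have htotal : ∑ i, loss i = ∑ i, c i - cycleSigma c y := by
    simp only [loss, cycleSigma, mul_sub, mul_one, sum_sub_distrib]
  linarith

variable (hy : Feasible y) (hc : ∀ i, 0 ≤ c i)
  (hmin : ∀ i, i ≠ Fin.last (n + 1) → c (Fin.last (n + 1)) < c i)
include hy hc hmin

theorem cycleSigma_lt {b : Fin (n + 2)} (hb : b ≠ Fin.last (n + 1)) (hyb : y b (b + 1) = 0) :
    cycleSigma c y < ∑ i, c i - 2 * c (Fin.last (n + 1)) := by
  have hle (i : Fin (n + 2)) : c (Fin.last (n + 1)) ≤ c i := by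
    rcases eq_or_ne i (Fin.last (n + 1)) with rfl | hi
    exacts [le_rfl, (hmin i hi).le]
  by_cases h : ∃ a, a ≠ b ∧ y a (a + 1) = 0
  · obtain ⟨a, hab, hya⟩ := h
    linarith [cycleSigma_le_sub_of_ne hy hc hab hya hyb, hle a, hmin b hb]
  · simp only [not_exists, not_and] at h
    have hall (i) (hi : i ≠ b) : y i (i + 1) = 1 :=
      hy.eq_one_of_ne_zero (Fin.add_one_ne_self i).symm (h i hi)
    rw [cycleSigma_eq_of_forall_ne hy (hy.add_one_self_eq_one n.succ_pos b hall) hall]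
    linarith [hmin b hb]

theorem cycleSigma_le : cycleSigma c y ≤ ∑ i, c i - 2 * c (Fin.last (n + 1)) := by
  by_cases h : ∃ b, b ≠ Fin.last (n + 1) ∧ y b (b + 1) = 0
  · obtain ⟨b, hb, hyb⟩ := h
    exact (cycleSigma_lt hy hc hmin hb hyb).le
  · simp only [not_exists, not_and] at h
    have hall (i) (hi : i ≠ Fin.last (n + 1)) : y i (i + 1) = 1 :=
      hy.eq_one_of_ne_zero (Fin.add_one_ne_self i).symm (h i hi)
    exact (cycleSigma_eq_of_forall_ne hy (hy.add_one_self_eq_one n.succ_pos _ hall) hall).le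

theorem forall_eq_one_of_le_cycleSigma
    (hopt : ∑ i, c i - 2 * c (Fin.last (n + 1)) ≤ cycleSigma c y) (i : Fin (n + 2))
    (hi : i ≠ Fin.last (n + 1)) : y i (i + 1) = 1 :=
  hy.eq_one_of_ne_zero (Fin.add_one_ne_self i).symm fun h0 =>
    (cycleSigma_lt hy hc hmin hi h0).not_ge hopt

end cycleSigma

theorem tieIdx_eq_zero {n : ℕ} (G : SimpleGraph (Fin n)) [DecidableRel G.Adj]
    (A : Fin n → Fin n → ℝ) (δ : ℝ) (y : Fin n → Fin n → ℝ)
    (hA : ∀ i j, G.Adj i j → A i j ≠ 1) : tieIdx G A δ y = 0 := by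
  rw [tieIdx, Finset.sum_eq_zero fun i _ => Finset.sum_eq_zero fun j _ =>
    if_neg fun hij => hA i j hij.1 hij.2, mul_zero]

theorem sigmaIdx_eq_cycleSigma {n : ℕ} (G : SimpleGraph (Fin (n + 3))) [DecidableRel G.Adj]
    (A : Fin (n + 3) → Fin (n + 3) → ℝ)
    (hAdj : ∀ i j : Fin (n + 3), G.Adj i j ↔ (j = i + 1 ∨ i = j + 1))
    (hrec : ∀ i j, G.Adj i j → A j i = 1 / A i j) (y : Fin (n + 3) → Fin (n + 3) → ℝ) :
    sigmaIdx G A y = cycleSigma (fun i => Real.log (A i (i + 1))) y := by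
  set f : Fin (n + 3) → Fin (n + 3) → ℝ := fun i j => Real.log (A i j) * (y i j - y j i)
  change (1 / 2 : ℝ) * ∑ i, ∑ j, (if G.Adj i j then f i j else 0) = ∑ i, f i (i + 1)
  have hsplit (i j : Fin (n + 3)) : (if G.Adj i j then f i j else 0) =
      (if j = i + 1 then f i j else 0) + (if i = j + 1 then f i j else 0) := by
    by_cases hj : j = i + 1 <;> by_cases hi : i = j + 1
    · exact absurd (hj ▸ hi).symm (Fin.add_one_add_one_ne_self i)
    · rw [if_pos ((hAdj i j).mpr (.inl hj)), if_pos hj, if_neg hi, add_zero]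
    · rw [if_pos ((hAdj i j).mpr (.inr hi)), if_neg hj, if_pos hi, zero_add]
    · rw [if_neg fun h => ((hAdj i j).mp h).elim hj hi, if_neg hj, if_neg hi, add_zero]
  have hback (j : Fin (n + 3)) : f (j + 1) j = f j (j + 1) := by
    simp only [f, hrec j (j + 1) ((hAdj _ _).mpr (Or.inl rfl)), one_div, Real.log_inv]
    ring
  simp only [hsplit, Finset.sum_add_distrib, Finset.sum_ite_eq']
  rw [Finset.sum_comm (f := fun i j => if i = j + 1 then f i j else 0)]
  simp only [Finset.sum_ite_eq', Finset.mem_univ, if_true, hback]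
  ring

/-- Vertex `i` plays the role of `v_{i+1}` and `m = k + 3`, so the edge `(v_m, v_1)` is
`Fin.last (k + 2) → 0`. -/
theorem problem1_single_cycle_unique_optimum_general
    (k : ℕ) (G : SimpleGraph (Fin (k + 3))) [DecidableRel G.Adj]
    (A : Fin (k + 3) → Fin (k + 3) → ℝ)
    (hAdj : ∀ i j : Fin (k + 3), G.Adj i j ↔ (j = i + 1 ∨ i = j + 1))
    (hrec : ∀ i j, G.Adj i j → A j i = 1 / A i j)
    (hgt : ∀ i : Fin (k + 3), 1 < A i (i + 1))
    (hmin : ∀ i : Fin (k + 3), i ≠ Fin.last (k + 2) →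
      A (Fin.last (k + 2)) (Fin.last (k + 2) + 1) < A i (i + 1))
    (δ : ℝ)
    (xbar : Fin (k + 3) → Fin (k + 3) → ℝ)
    (hxbar : ∀ i j : Fin (k + 3), xbar i j = if i < j then 1 else 0) :
    Feasible xbar ∧
    (∀ y, Feasible y →
      sigmaIdx G A y + tieIdx G A δ y ≤ sigmaIdx G A xbar + tieIdx G A δ xbar) ∧
    (∀ y, Feasible y →
      (∀ z, Feasible z →
        sigmaIdx G A z + tieIdx G A δ z ≤ sigmaIdx G A y + tieIdx G A δ y) →
      ∀ i j, i ≠ j → y i j = xbar i j) ∧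
    sigmaIdx G A xbar =
      (∑ i ∈ Finset.univ.filter (fun i : Fin (k + 3) => i ≠ Fin.last (k + 2)),
        Real.log (A i (i + 1)))
        - Real.log (A (Fin.last (k + 2)) (Fin.last (k + 2) + 1)) := by
  obtain rfl : xbar = fun i j => if i < j then 1 else 0 := funext₂ hxbar
  set c : Fin (k + 3) → ℝ := fun i => Real.log (A i (i + 1))
  have hc (i : Fin (k + 3)) : 0 ≤ c i := (Real.log_pos (hgt i)).le
  have hcmin (i : Fin (k + 3)) (hi : i ≠ Fin.last (k + 2)) : c (Fin.last (k + 2)) < c i :=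
    Real.log_lt_log (one_pos.trans (hgt _)) (hmin i hi)
  have hA (i j : Fin (k + 3)) (hij : G.Adj i j) : A i j ≠ 1 := by
    rcases (hAdj i j).mp hij with rfl | rfl
    · exact (hgt i).ne'
    · rw [hrec _ _ ((hAdj _ _).mpr (.inl rfl)), one_div, Ne, inv_eq_one]
      exact (hgt j).ne'
  have hobj (y : Fin (k + 3) → Fin (k + 3) → ℝ) :
      sigmaIdx G A y + tieIdx G A δ y = cycleSigma c y := by
    rw [sigmaIdx_eq_cycleSigma G A hAdj hrec, tieIdx_eq_zero G A δ y hA, add_zero]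
  refine ⟨feasible_ite_lt _, fun y hy => ?_, fun y hy hopt i j hij => ?_, ?_⟩
  · rw [hobj, hobj, cycleSigma_ite_lt]
    exact cycleSigma_le hy hc hcmin
  · have hge := hopt _ (feasible_ite_lt _)
    rw [hobj, hobj, cycleSigma_ite_lt] at hge
    exact hy.eq_ite_lt (forall_eq_one_of_le_cycleSigma hy hc hcmin hge) hij
  · rw [sigmaIdx_eq_cycleSigma G A hAdj hrec, cycleSigma_ite_lt, Finset.filter_ne',
      Finset.sum_erase_eq_sub (Finset.mem_univ _)]
    ring

/-- **Problem 1 on a single nonambiguous directed cycle.**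
Alternatives are `0,…,m−1` (`m = k+3 ≥ 3`, vertex `i` playing the role of
`v_{i+1}`), the comparison graph is the `m`-cycle, `𝒜 > 1` on every directed edge
`i → i+1` of the cycle, and the edge from the last vertex back to `0` (i.e.
`(v_m , v_1)`) is the unique edge attaining the minimum `𝒜` value. Then Problem 1
has the unique optimal solution `x̄` with `x̄ i j = 1` iff `i < j`, and its optimal
value is `σ(x̄) = Σ_{i<m−1} ln 𝒜_{i,i+1} − ln 𝒜_{m−1,0}`. -/
theorem problem1_single_cycle_unique_optimum
    (k : ℕ) (G : SimpleGraph (Fin (k + 3))) [DecidableRel G.Adj]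
    (A : Fin (k + 3) → Fin (k + 3) → ℝ)
    (hAdj : ∀ i j : Fin (k + 3), G.Adj i j ↔ (j = i + 1 ∨ i = j + 1))
    (hpos : ∀ i j, G.Adj i j → 0 < A i j)
    (hrec : ∀ i j, G.Adj i j → A j i = 1 / A i j)
    (hzero : ∀ i j, ¬ G.Adj i j → A i j = 0)
    (hgt : ∀ i : Fin (k + 3), 1 < A i (i + 1))
    (hmin : ∀ i : Fin (k + 3), i ≠ Fin.last (k + 2) →
      A (Fin.last (k + 2)) (Fin.last (k + 2) + 1) < A i (i + 1))
    (δ : ℝ) (hδ : 0 < δ)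
    (xbar : Fin (k + 3) → Fin (k + 3) → ℝ)
    (hxbar : ∀ i j : Fin (k + 3), xbar i j = if i < j then 1 else 0) :
    Feasible xbar ∧
    (∀ y, Feasible y →
      sigmaIdx G A y + tieIdx G A δ y ≤ sigmaIdx G A xbar + tieIdx G A δ xbar) ∧
    (∀ y, Feasible y →
      (∀ z, Feasible z →
        sigmaIdx G A z + tieIdx G A δ z ≤ sigmaIdx G A y + tieIdx G A δ y) →
      ∀ i j, i ≠ j → y i j = xbar i j) ∧
    sigmaIdx G A xbar =
      (∑ i ∈ Finset.univ.filter (fun i : Fin (k + 3) => i ≠ Fin.last (k + 2)),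
        Real.log (A i (i + 1)))
        - Real.log (A (Fin.last (k + 2)) (Fin.last (k + 2) + 1)) :=
  problem1_single_cycle_unique_optimum_general k G A hAdj hrec hgt hmin δ xbar hxbar
end
end

section
/- Let 𝒜 be an incomplete pairwise comparison matrix on n alternatives such that 𝒜_ij ≠ 1 on every edge (no ties) and the associated directed graph G_d = (V, E_d) is acyclic. Define x̄ by x̄_ij = 1 if and only if there is a directed path from i to j in G_d (the transitive closure of the edge relation of G_d), and x̄_ij = 0 otherwise. Then x̄ is a feasible pairwise ordinal preference assignment, and x̄ is an optimal solution of Problem 1, with optimal value σ(x̄) = Σ_{(i,j) ∈ E_d} ln 𝒜_ij. -/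
noncomputable section

open scoped Classical in
/-- **Problem 1 on an acyclic instance.** Let `𝒜` be an incomplete pairwise
comparison matrix with no ties (`𝒜_ij ≠ 1` on every edge) whose associated
directed graph `G_d` (edge `(i,j)` iff `{i,j} ∈ E` and `𝒜_ij > 1`) is acyclic.
Then the indicator `x̄` of the transitive closure of `G_d` (i.e. `x̄ i j = 1` iff
there is a directed path from `i` to `j`) is a feasible pairwise ordinal
preference assignment, it is optimal for Problem 1, and its value is
`σ(x̄) = Σ_{(i,j) ∈ E_d} ln 𝒜_ij`. -/
theorem problem1_acyclic_transitive_closure_optimal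
    {n : ℕ} (G : SimpleGraph (Fin n)) [DecidableRel G.Adj] (hconn : G.Connected)
    (A : Fin n → Fin n → ℝ)
    (hpos : ∀ i j, G.Adj i j → 0 < A i j)
    (hrec : ∀ i j, G.Adj i j → A j i = 1 / A i j)
    (hzero : ∀ i j, ¬ G.Adj i j → A i j = 0)
    (hnoties : ∀ i j, G.Adj i j → A i j ≠ 1)
    (hacyclic : ∀ i : Fin n,
      ¬ Relation.TransGen (fun a b => G.Adj a b ∧ 1 < A a b) i i)
    (δ : ℝ) (hδ : 0 < δ)
    (xbar : Fin n → Fin n → ℝ)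
    (hxbar : ∀ i j : Fin n,
      (Relation.TransGen (fun a b => G.Adj a b ∧ 1 < A a b) i j → xbar i j = 1) ∧
      (¬ Relation.TransGen (fun a b => G.Adj a b ∧ 1 < A a b) i j → xbar i j = 0)) :
    Feasible xbar ∧
    (∀ y, Feasible y →
      sigmaIdx G A y + tieIdx G A δ y ≤ sigmaIdx G A xbar + tieIdx G A δ xbar) ∧
    sigmaIdx G A xbar =
      ∑ i : Fin n, ∑ j : Fin n,
        if G.Adj i j ∧ 1 < A i j then Real.log (A i j) else 0 := by
  classical
  set S : Fin n → Fin n → Prop := fun a b => G.Adj a b ∧ 1 < A a b with hS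
  have hx1 : ∀ i j, Relation.TransGen S i j → xbar i j = 1 := fun i j h => (hxbar i j).1 h
  have hx0 : ∀ i j, ¬ Relation.TransGen S i j → xbar i j = 0 := fun i j h => (hxbar i j).2 h
  have hx01 : ∀ i j, xbar i j = 0 ∨ xbar i j = 1 := by
    intro i j
    by_cases h : Relation.TransGen S i j
    · exact Or.inr (hx1 i j h)
    · exact Or.inl (hx0 i j h)
  have hxnn : ∀ i j, 0 ≤ xbar i j := by
    intro i j; rcases hx01 i j with h | h <;> simp [h]
  have hxle : ∀ i j, xbar i j ≤ 1 := by
    intro i j; rcases hx01 i j with h | h <;> simp [h]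
  have hback : ∀ i j, xbar i j = 1 → Relation.TransGen S i j := by
    intro i j h
    by_contra hc
    rw [hx0 i j hc] at h; norm_num at h
  have hnotboth : ∀ i j, Relation.TransGen S i j → ¬ Relation.TransGen S j i := by
    intro i j h hji
    exact hacyclic i (h.trans hji)
  have hedge : ∀ i j, G.Adj i j → 1 < A i j → xbar i j = 1 ∧ xbar j i = 0 := by
    intro i j hadj hA
    have hR : Relation.TransGen S i j := Relation.TransGen.single ⟨hadj, hA⟩
    exact ⟨hx1 i j hR, hx0 j i (hnotboth i j hR)⟩
  have hAcases : ∀ i j, G.Adj i j → 1 < A i j ∨ 1 < A j i := by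
    intro i j hadj
    rcases lt_or_gt_of_ne (hnoties i j hadj) with h | h
    · right
      rw [hrec i j hadj]
      exact one_lt_one_div (hpos i j hadj) h
    · left; exact h
  have hAsmall : ∀ i j, G.Adj i j → 1 < A j i → A i j < 1 := by
    intro i j hadj hA
    rw [hrec j i hadj.symm]
    exact (div_lt_one (hpos j i hadj.symm)).mpr hA
  have hfeas : Feasible xbar := by
    refine ⟨fun i j _ => hx01 i j, ?_, ?_⟩
    · intro i j hij
      by_cases h : Relation.TransGen S i j
      · rw [hx1 i j h, hx0 j i (hnotboth i j h)]; norm_num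
      · rw [hx0 i j h]
        simpa using hxle j i
    · intro i j k hij hjk hik
      rcases hx01 i k with h | h
      · rw [h]; simpa using hxnn i j
      rcases hx01 k j with h2 | h2
      · rw [h2]; simpa using hxnn i j
      · rw [h, h2, hx1 i j ((hback i k h).trans (hback k j h2))]; norm_num
  -- value of sigma at xbar
  have hpt : ∀ i j, (if G.Adj i j then Real.log (A i j) * (xbar i j - xbar j i) else 0)
      = (if G.Adj i j ∧ 1 < A i j then Real.log (A i j) else 0)
        + (if G.Adj j i ∧ 1 < A j i then Real.log (A j i) else 0) := by
    intro i j
    by_cases hadj : G.Adj i j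
    · rcases hAcases i j hadj with hA | hA
      · have hx := hedge i j hadj hA
        have hlt : A j i < 1 := hAsmall j i hadj.symm hA
        rw [if_pos hadj, if_pos ⟨hadj, hA⟩, if_neg (fun h => absurd h.2 (not_lt.mpr hlt.le)),
          hx.1, hx.2]
        ring
      · have hx := hedge j i hadj.symm hA
        have hlt : A i j < 1 := hAsmall i j hadj hA
        rw [if_pos hadj, if_neg (fun h => absurd h.2 (not_lt.mpr hlt.le)),
          if_pos ⟨hadj.symm, hA⟩, hx.1, hx.2]
        have hlog : Real.log (A j i) = - Real.log (A i j) := by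
          rw [hrec i j hadj, one_div, Real.log_inv]
        rw [hlog]; ring
    · rw [if_neg hadj, if_neg (fun h : G.Adj i j ∧ _ => hadj h.1),
        if_neg (fun h : G.Adj j i ∧ _ => hadj h.1.symm)]
      ring
  have hsig : sigmaIdx G A xbar =
      ∑ i : Fin n, ∑ j : Fin n, if G.Adj i j ∧ 1 < A i j then Real.log (A i j) else 0 := by
    unfold sigmaIdx
    rw [Finset.sum_congr rfl fun i _ => Finset.sum_congr rfl fun j _ => hpt i j]
    simp only [Finset.sum_add_distrib]
    rw [Finset.sum_comm (f := fun i j => if G.Adj j i ∧ 1 < A j i then Real.log (A j i) else 0)]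
    ring
  have htie : ∀ y : Fin n → Fin n → ℝ, tieIdx G A δ y = 0 := by
    intro y
    unfold tieIdx
    have h0 : ∀ i j : Fin n, (if G.Adj i j ∧ A i j = 1 then y i j + y j i else 0) = 0 := by
      intro i j
      rw [if_neg]
      rintro ⟨hadj, h1⟩
      exact hnoties i j hadj h1
    simp [h0]
  refine ⟨hfeas, ?_, hsig⟩
  intro y hy
  rw [htie y, htie xbar, add_zero, add_zero]
  unfold sigmaIdx
  refine mul_le_mul_of_nonneg_left ?_ (by norm_num)
  refine Finset.sum_le_sum fun i _ => Finset.sum_le_sum fun j _ => ?_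
  by_cases hadj : G.Adj i j
  · rw [if_pos hadj, if_pos hadj]
    have hij := hadj.ne
    obtain ⟨hy01, hysum, -⟩ := hy
    have hnn : 0 ≤ y i j := by rcases hy01 i j hij with h | h <;> simp [h]
    have hnn' : 0 ≤ y j i := by rcases hy01 j i (Ne.symm hij) with h | h <;> simp [h]
    have hle1 : y i j ≤ 1 := by have := hysum i j hij; linarith
    have hle1' : y j i ≤ 1 := by have := hysum i j hij; linarith
    rcases hAcases i j hadj with hA | hA
    · have hx := hedge i j hadj hA
      rw [hx.1, hx.2]
      have hlog : 0 ≤ Real.log (A i j) := Real.log_nonneg hA.le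
      have hd : y i j - y j i ≤ 1 - 0 := by linarith
      exact mul_le_mul_of_nonneg_left hd hlog
    · have hx := hedge j i hadj.symm hA
      rw [hx.2, hx.1]
      have hlt : A i j < 1 := hAsmall i j hadj hA
      have hlog : Real.log (A i j) ≤ 0 := Real.log_nonpos (hpos i j hadj).le hlt.le
      have hd : (0 : ℝ) - 1 ≤ y i j - y j i := by linarith
      exact mul_le_mul_of_nonpos_left hd hlog
  · simp [hadj]
end
end
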